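/- For the Grushin inversion, for each j one has Σ_{k=1}^N ∂²y_j/∂x̃_k² + |x̃|^{2γ} Σ_{h=1}^l ∂²y_j/∂ỹ_h² = (2(2 - N - l - lγ)/(1+γ)) ỹ_j |x̃|^{2γ} d(z̃,0)^{-4-4γ}. -/

import Mathlib

open MeasureTheory Real

noncomputable section

variable {N l : ℕ}

/-- squared Euclidean norm -/
def nsq {n : ℕ} (x : Fin n → ℝ) : ℝ := ∑ i, x i ^ 2

/-- partial derivative in the `i`-th `x` direction -/
def pdx (u : (Fin N → ℝ) × (Fin l → ℝ) → ℝ) (i : Fin N)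
    (z : (Fin N → ℝ) × (Fin l → ℝ)) : ℝ :=
  deriv (fun t => u (Function.update z.1 i t, z.2)) (z.1 i)

/-- partial derivative in the `j`-th `y` direction -/
def pdy (u : (Fin N → ℝ) × (Fin l → ℝ) → ℝ) (j : Fin l)
    (z : (Fin N → ℝ) × (Fin l → ℝ)) : ℝ :=
  deriv (fun t => u (z.1, Function.update z.2 j t)) (z.2 j)

/-- Grushin operator `Δ_γ u = Δ_x u + |x|^{2γ} Δ_y u` -/
def grushinLap (γ : ℝ) (u : (Fin N → ℝ) × (Fin l → ℝ) → ℝ)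
    (z : (Fin N → ℝ) × (Fin l → ℝ)) : ℝ :=
  (∑ i, pdx (pdx u i) i z) + (nsq z.1) ^ γ * ∑ j, pdy (pdy u j) j z

/-- the Grushin distance to the origin:
`d(z,0) = ((1/(1+γ)²)|x|^{2+2γ} + |y|²)^{1/(2+2γ)}` (note `|x|^{2+2γ} = (nsq x)^{1+γ}`). -/
def gd (γ : ℝ) (z : (Fin N → ℝ) × (Fin l → ℝ)) : ℝ :=
  ((1 / (1 + γ) ^ 2) * (nsq z.1) ^ (1 + γ) + nsq z.2) ^ (1 / (2 + 2 * γ))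

/-- the Grushin inversion `x̃ = x/d², ỹ = y/d^{2+2γ}` -/
def ginv (γ : ℝ) (z : (Fin N → ℝ) × (Fin l → ℝ)) : (Fin N → ℝ) × (Fin l → ℝ) :=
  (fun i => z.1 i / gd γ z ^ 2, fun j => z.2 j / gd γ z ^ (2 + 2 * γ))

/-- divergence of a vector field on `ℝ^N × ℝ^l` -/
def gdiv (X : (Fin N → ℝ) × (Fin l → ℝ) → (Fin N → ℝ) × (Fin l → ℝ))
    (z : (Fin N → ℝ) × (Fin l → ℝ)) : ℝ :=
  (∑ i, pdx (fun w => (X w).1 i) i z) + ∑ j, pdy (fun w => (X w).2 j) j z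

/-- Euclidean dot product on `ℝ^N × ℝ^l` -/
def gdot (v w : (Fin N → ℝ) × (Fin l → ℝ)) : ℝ :=
  (∑ i, v.1 i * w.1 i) + ∑ j, v.2 j * w.2 j


/-!
Away from `x = 0` the `y`-coordinates of the inversion are `y_j / ρ` with
`ρ = d^{2+2γ} = |x|^{2+2γ}/(1+γ)² + |y|²`, which is smooth there. Each second partial derivative in
the Grushin operator is a second derivative along a coordinate line, given by the quotient rule.
After summing, the `|x|^{2+2γ}` and `|y|²` contributions recombine into `8ρ`, which leaves the
factor `2(2 - N - l - lγ)/(1+γ)`.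
-/

open Filter Topology

lemma deriv_deriv_div_eq {f f' g g' : ℝ → ℝ} {f'' g'' t₀ : ℝ}
    (hf : ∀ᶠ t in 𝓝 t₀, HasDerivAt f (f' t) t) (hg : ∀ᶠ t in 𝓝 t₀, HasDerivAt g (g' t) t)
    (hf' : HasDerivAt f' f'' t₀) (hg' : HasDerivAt g' g'' t₀) (hf₀ : f t₀ ≠ 0) :
    deriv (deriv fun t => g t / f t) t₀ =
      (g'' * f t₀ ^ 2 - 2 * g' t₀ * f' t₀ * f t₀ - g t₀ * f'' * f t₀ + 2 * g t₀ * f' t₀ ^ 2) /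
        f t₀ ^ 3 := by
  have hne : ∀ᶠ t in 𝓝 t₀, f t ≠ 0 := hf.self_of_nhds.continuousAt.eventually_ne hf₀
  have hderiv : deriv (fun t => g t / f t) =ᶠ[𝓝 t₀]
      fun t => (g' t * f t - g t * f' t) / f t ^ 2 := by
    filter_upwards [hf, hg, hne] with t hft hgt ht using (hgt.div hft ht).deriv
  have hquot : HasDerivAt (fun t => (g' t * f t - g t * f' t) / f t ^ 2) _ t₀ :=
    ((hg'.fun_mul hf.self_of_nhds).fun_sub (hg.self_of_nhds.fun_mul hf')).fun_div
      (hf.self_of_nhds.fun_pow 2) (pow_ne_zero 2 hf₀)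
  rw [hderiv.deriv_eq, hquot.deriv]
  field_simp
  ring

lemma nsq_update {n : ℕ} (x : Fin n → ℝ) (k : Fin n) (t : ℝ) :
    nsq (Function.update x k t) = nsq x - x k ^ 2 + t ^ 2 := by
  rw [nsq, nsq, ← Finset.add_sum_erase _ _ (Finset.mem_univ k),
    ← Finset.add_sum_erase _ _ (Finset.mem_univ k),
    Finset.sum_congr rfl fun i hi => by rw [Function.update_of_ne (Finset.ne_of_mem_erase hi)],
    Function.update_self]
  ring

lemma hasDerivAt_nsq_update {n : ℕ} (x : Fin n → ℝ) (k : Fin n) (t : ℝ) :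
    HasDerivAt (fun t => nsq (Function.update x k t)) (2 * t) t := by
  simp_rw [nsq_update]
  simpa using (hasDerivAt_pow 2 t).const_add (nsq x - x k ^ 2)

lemma nsq_nonneg {n : ℕ} (x : Fin n → ℝ) : 0 ≤ nsq x :=
  Finset.sum_nonneg fun _ _ => sq_nonneg _

lemma nsq_pos {n : ℕ} {x : Fin n → ℝ} (hx : x ≠ 0) : 0 < nsq x := by
  obtain ⟨i, hi⟩ := Function.ne_iff.mp hx
  exact Finset.sum_pos' (fun i _ => sq_nonneg _) ⟨i, Finset.mem_univ i, sq_pos_of_ne_zero hi⟩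

lemma hasDerivAt_update_apply {n : ℕ} (y : Fin n → ℝ) (h i : Fin n) (t : ℝ) :
    HasDerivAt (fun t => Function.update y h t i) (if i = h then 1 else 0) t := by
  split_ifs with hih
  · subst hih
    simpa using hasDerivAt_id' t
  · simpa [Function.update_of_ne hih] using hasDerivAt_const t (y i)

lemma pdx_pdx (u : (Fin N → ℝ) × (Fin l → ℝ) → ℝ) (k : Fin N) (z : (Fin N → ℝ) × (Fin l → ℝ)) :
    pdx (pdx u k) k z = deriv (deriv fun t => u (Function.update z.1 k t, z.2)) (z.1 k) := by
  simp only [pdx, Function.update_idem, Function.update_self]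

lemma pdy_pdy (u : (Fin N → ℝ) × (Fin l → ℝ) → ℝ) (h : Fin l) (z : (Fin N → ℝ) × (Fin l → ℝ)) :
    pdy (pdy u h) h z = deriv (deriv fun t => u (z.1, Function.update z.2 h t)) (z.2 h) := by
  simp only [pdy, Function.update_idem, Function.update_self]

/-- `gd γ z ^ (2 + 2γ)`, see `gd_rpow_mul`. -/
def gdPow (γ : ℝ) (z : (Fin N → ℝ) × (Fin l → ℝ)) : ℝ :=
  1 / (1 + γ) ^ 2 * nsq z.1 ^ (1 + γ) + nsq z.2

lemma gdPow_nonneg (γ : ℝ) (z : (Fin N → ℝ) × (Fin l → ℝ)) : 0 ≤ gdPow γ z := by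
  have := nsq_nonneg z.2
  have := rpow_nonneg (nsq_nonneg z.1) (1 + γ)
  unfold gdPow
  positivity

section
variable {γ : ℝ} (hγ : 1 + γ ≠ 0)
include hγ

lemma gdPow_pos {z : (Fin N → ℝ) × (Fin l → ℝ)} (hx : z.1 ≠ 0) : 0 < gdPow γ z := by
  have := nsq_nonneg z.2
  have := rpow_pos_of_pos (nsq_pos hx) (1 + γ)
  unfold gdPow
  positivity

lemma gd_rpow_mul (z : (Fin N → ℝ) × (Fin l → ℝ)) (p : ℝ) :
    gd γ z ^ ((2 + 2 * γ) * p) = gdPow γ z ^ p := by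
  have h2 : 2 + 2 * γ ≠ 0 := by contrapose! hγ; linarith
  rw [show gd γ z = gdPow γ z ^ (1 / (2 + 2 * γ)) from rfl, ← rpow_mul (gdPow_nonneg γ z),
    ← mul_assoc, one_div_mul_cancel h2, one_mul]

lemma ginv_snd_eq_div_gdPow (j : Fin l) :
    (fun w => (ginv γ w).2 j) = fun w : (Fin N → ℝ) × (Fin l → ℝ) => w.2 j / gdPow γ w := by
  funext w
  simpa [ginv] using congrArg (w.2 j / ·) (gd_rpow_mul hγ w 1)

lemma gd_rpow_neg (z : (Fin N → ℝ) × (Fin l → ℝ)) :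
    gd γ z ^ (-4 - 4 * γ) = (gdPow γ z ^ 2)⁻¹ := by
  rw [show -4 - 4 * γ = (2 + 2 * γ) * -2 by ring, gd_rpow_mul hγ, rpow_neg (gdPow_nonneg γ z),
    rpow_two]

variable {z : (Fin N → ℝ) × (Fin l → ℝ)} (j : Fin l)

lemma pdx_pdx_div_gdPow (hx : z.1 ≠ 0) (k : Fin N) :
    pdx (pdx (fun w => w.2 j / gdPow γ w) k) k z =
      z.2 j * (8 / (1 + γ) ^ 2 * (nsq z.1 ^ γ) ^ 2 * z.1 k ^ 2
        - 2 / (1 + γ) * gdPow γ z * (nsq z.1 ^ γ + 2 * γ * z.1 k ^ 2 * nsq z.1 ^ (γ - 1))) /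
        gdPow γ z ^ 3 := by
  set q : ℝ → ℝ := fun t => nsq (Function.update z.1 k t)
  have hq : ∀ t, HasDerivAt q (2 * t) t := hasDerivAt_nsq_update z.1 k
  have hq₀ : q (z.1 k) = nsq z.1 := by simp [q]
  have hq_ne : ∀ᶠ t in 𝓝 (z.1 k), q t ≠ 0 :=
    (hq _).continuousAt.eventually_ne (hq₀ ▸ (nsq_pos hx).ne')
  have hf : ∀ᶠ t in 𝓝 (z.1 k), HasDerivAt (fun t => 1 / (1 + γ) ^ 2 * q t ^ (1 + γ) + nsq z.2)
      (2 / (1 + γ) * (t * q t ^ γ)) t := by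
    filter_upwards [hq_ne] with t ht
    refine ((((hq t).rpow_const (p := 1 + γ) (Or.inl ht)).const_mul _).add_const _).congr_deriv ?_
    rw [add_sub_cancel_left]
    field_simp
  have hf' : HasDerivAt (fun t => 2 / (1 + γ) * (t * q t ^ γ))
      (2 / (1 + γ) * (nsq z.1 ^ γ + z.1 k * (2 * z.1 k * γ * nsq z.1 ^ (γ - 1)))) (z.1 k) := by
    have := (hasDerivAt_id _).fun_mul ((hq _).rpow_const (p := γ) (Or.inl hq_ne.self_of_nhds))
    simpa [hq₀] using this.const_mul (2 / (1 + γ))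
  rw [pdx_pdx]
  refine (deriv_deriv_div_eq (g := fun _ => z.2 j) hf (.of_forall fun t => hasDerivAt_const t _) hf'
    (hasDerivAt_const _ _) ?_).trans ?_
  · exact hq₀ ▸ (gdPow_pos hγ hx).ne'
  · rw [hq₀, show 1 / (1 + γ) ^ 2 * nsq z.1 ^ (1 + γ) + nsq z.2 = gdPow γ z from rfl]
    field_simp
    ring

lemma sum_pdx_pdx_div_gdPow (hx : z.1 ≠ 0) :
    ∑ k, pdx (pdx (fun w => w.2 j / gdPow γ w) k) k z =
      z.2 j * nsq z.1 ^ γ * (8 / (1 + γ) ^ 2 * nsq z.1 ^ (1 + γ)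
        - 2 * (N + 2 * γ) / (1 + γ) * gdPow γ z) / gdPow γ z ^ 3 := by
  have hs := nsq_pos hx
  set s := nsq z.1
  set ρ := gdPow γ z
  have hterm : ∀ k, pdx (pdx (fun w => w.2 j / gdPow γ w) k) k z =
      z.2 j * (-2 / (1 + γ) * ρ * s ^ γ) / ρ ^ 3 +
        z.2 j * (8 / (1 + γ) ^ 2 * (s ^ γ) ^ 2 - 4 * γ / (1 + γ) * ρ * s ^ (γ - 1)) / ρ ^ 3 *
          z.1 k ^ 2 := fun k => by
    rw [pdx_pdx_div_gdPow hγ j hx]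
    ring
  rw [Finset.sum_congr rfl fun k _ => hterm k, Finset.sum_add_distrib, Finset.sum_const,
    ← Finset.mul_sum, show ∑ k, z.1 k ^ 2 = s from rfl, Finset.card_univ, Fintype.card_fin,
    nsmul_eq_mul, rpow_sub_one hs.ne', rpow_add hs, rpow_one]
  field_simp
  ring

lemma pdy_pdy_div_gdPow (hx : z.1 ≠ 0) (h : Fin l) :
    pdy (pdy (fun w => w.2 j / gdPow γ w) h) h z =
      (8 * z.2 j * z.2 h ^ 2 - 2 * z.2 j * gdPow γ z
        - 4 * (if j = h then z.2 h else 0) * gdPow γ z) / gdPow γ z ^ 3 := by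
  set q : ℝ → ℝ := fun t => nsq (Function.update z.2 h t)
  have hq₀ : q (z.2 h) = nsq z.2 := by simp [q]
  have hf : ∀ t, HasDerivAt (fun t => 1 / (1 + γ) ^ 2 * nsq z.1 ^ (1 + γ) + q t) (2 * t) t :=
    fun t => (hasDerivAt_nsq_update z.2 h t).const_add _
  have hf' : HasDerivAt (fun t : ℝ => 2 * t) 2 (z.2 h) := by
    simpa using (hasDerivAt_id _).const_mul (2 : ℝ)
  rw [pdy_pdy]
  refine (deriv_deriv_div_eq (.of_forall hf) (.of_forall (hasDerivAt_update_apply z.2 h j)) hf'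
    (hasDerivAt_const _ _) ?_).trans ?_
  · exact hq₀ ▸ (gdPow_pos hγ hx).ne'
  · rw [hq₀, show 1 / (1 + γ) ^ 2 * nsq z.1 ^ (1 + γ) + nsq z.2 = gdPow γ z from rfl]
    split_ifs with hjh
    · subst hjh
      simp only [Function.update_self]
      ring
    · simp only [Function.update_of_ne hjh]
      ring

lemma sum_pdy_pdy_div_gdPow (hx : z.1 ≠ 0) :
    ∑ h, pdy (pdy (fun w => w.2 j / gdPow γ w) h) h z =
      z.2 j * (8 * nsq z.2 - (2 * l + 4) * gdPow γ z) / gdPow γ z ^ 3 := by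
  simp only [pdy_pdy_div_gdPow hγ j hx, ← Finset.sum_div, Finset.sum_sub_distrib, ← Finset.mul_sum,
    ← Finset.sum_mul, Finset.sum_ite_eq, Finset.mem_univ, if_true, Finset.sum_const,
    Finset.card_univ, Fintype.card_fin, nsmul_eq_mul]
  rw [show ∑ h, z.2 h ^ 2 = nsq z.2 from rfl]
  ring

end

/-- Grushin Laplacian of the `y`-coordinates of the Grushin inversion. -/
theorem ginv_grushinLap_y (γ : ℝ) (hγ : 0 ≤ γ)
    (z : (Fin N → ℝ) × (Fin l → ℝ)) (hx : z.1 ≠ 0) (j : Fin l) :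
    grushinLap γ (fun w => (ginv γ w).2 j) z
      = (2 * (2 - (N : ℝ) - l - l * γ) / (1 + γ)) * z.2 j * (nsq z.1) ^ γ *
          gd γ z ^ (-4 - 4 * γ) := by
  have hγ' : 1 + γ ≠ 0 := by positivity
  rw [grushinLap, ginv_snd_eq_div_gdPow hγ', sum_pdx_pdx_div_gdPow hγ' j hx,
    sum_pdy_pdy_div_gdPow hγ' j hx, gd_rpow_neg hγ', show nsq z.2 = gdPow γ z - 1 / (1 + γ) ^ 2 * nsq z.1 ^ (1 + γ) by
      rw [gdPow]; ring]
  have hρ := (gdPow_pos hγ' hx).ne'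
  field_simp
  ring
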